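/- arXiv:1409.5162 — 3 statements merged into one kernel-verified Lean document; each statement's English description precedes it below -/
import Mathlib

section
/- Let U ≤ N be positive integers, let 0 < κ ≤ π, and let φ_1, …, φ_U be independent real-valued random variables on a probability space, each with law absolutely continuous with respect to Lebesgue measure. Let A(ω) ∈ ℂ^{N×U} be the random matrix whose u-th column is the ULA steering vector a_N(κ sin φ_u(ω)). Then, almost surely, the matrix A(ω)ᴴA(ω) is Hermitian positive definite. -/
open Matrix Complex MeasureTheory ProbabilityTheory
open scoped ComplexOrder

/-- The ULA steering vector `a_N(θ) ∈ ℂ^N`, with `(a_N(θ))_k = (1/√N) e^{i k θ}`. -/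
noncomputable def steer (N : ℕ) (θ : ℝ) : Fin N → ℂ :=
  fun k => ((1 / Real.sqrt N : ℝ) : ℂ) * Complex.exp (Complex.I * ((k : ℕ) : ℂ) * (θ : ℂ))

/-!
The columns of `A ω` are `N^(-1/2) (1, x_u, …, x_u^(N-1))` with nodes `x_u = exp(i κ sin φ_u)`,
so `A ω` is a scaled Vandermonde matrix with at least as many rows as columns. It has trivial
kernel, and hence `(A ω)ᴴ A ω` is positive definite, as soon as the nodes are distinct. For
`κ ≠ 0` the map `t ↦ exp(i κ sin t)` has countable fibres, so for independent `φ_u`, `φ_v` with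
absolutely continuous laws, Fubini gives `P(x_u = x_v) = 0`.
-/

theorem Real.countable_setOf_sin_eq (y : ℝ) : {t : ℝ | Real.sin t = y}.Countable := by
  by_cases! hy : ∃ x, Real.sin x = y
  · obtain ⟨x, rfl⟩ := hy
    refine (Set.countable_iUnion fun k : ℤ =>
      (Set.countable_singleton (2 * k * Real.pi + x)).insert ((2 * k + 1) * Real.pi - x)).mono
      fun t ht => ?_
    obtain ⟨k, hk⟩ := Real.sin_eq_sin_iff.mp ht.symm
    exact Set.mem_iUnion.mpr ⟨k, by rcases hk with rfl | rfl <;> simp⟩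
  · simp [hy]

theorem Set.Countable.preimage_sin {s : Set ℝ} (hs : s.Countable) :
    (Real.sin ⁻¹' s).Countable := by
  rw [← Set.biUnion_preimage_singleton]
  exact hs.biUnion fun y _ => Real.countable_setOf_sin_eq y

theorem countable_preimage_cexp_mul_sin {κ : ℝ} (hκ : κ ≠ 0) {s : Set ℂ} (hs : s.Countable) :
    ((fun t : ℝ => cexp ((κ * Real.sin t : ℝ) * I)) ⁻¹' s).Countable :=
  show (Real.sin ⁻¹' ((κ * ·) ⁻¹' (((↑) : ℝ → ℂ) ⁻¹' ((· * I) ⁻¹' (cexp ⁻¹' s))))).Countable from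
    (((hs.preimage_cexp.preimage (mul_left_injective₀ I_ne_zero)).preimage ofReal_injective).preimage
      (mul_right_injective₀ hκ)).preimage_sin

section Independence

variable {Ω α β : Type*} [MeasurableSpace Ω] [MeasurableSpace α] [MeasurableSpace β]
  {μ : Measure Ω} [IsFiniteMeasure μ]

theorem ProbabilityTheory.IndepFun.measure_mem_eq_zero {X : Ω → α} {Y : Ω → β}
    (hX : Measurable X) (hY : Measurable Y) (hXY : X ⟂ᵢ[μ] Y) {s : Set (α × β)}
    (hs : MeasurableSet s) (hsec : ∀ a, μ.map Y (Prod.mk a ⁻¹' s) = 0) :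
    μ {ω | (X ω, Y ω) ∈ s} = 0 :=
  calc μ ((fun ω => (X ω, Y ω)) ⁻¹' s) = μ.map (fun ω => (X ω, Y ω)) s :=
        (Measure.map_apply (hX.prodMk hY) hs).symm
    _ = (μ.map X).prod (μ.map Y) s := by
        rw [(indepFun_iff_map_prod_eq_prod_map_map hX.aemeasurable hY.aemeasurable).mp hXY]
    _ = 0 := by simp [Measure.prod_apply hs, hsec]

theorem ProbabilityTheory.IndepFun.measure_comp_eq_comp_eq_zero [MeasurableEq β]
    {ν : Measure α} [NullSingletonClass ν] {g : α → β} (hg : Measurable g)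
    (hfib : ∀ b, (g ⁻¹' {b}).Countable) {X Y : Ω → α} (hX : Measurable X) (hY : Measurable Y)
    (hXY : X ⟂ᵢ[μ] Y) (hYν : μ.map Y ≪ ν) :
    μ {ω | g (X ω) = g (Y ω)} = 0 :=
  hXY.measure_mem_eq_zero hX hY (s := {p | g p.1 = g p.2})
    (measurableSet_eq_fun (hg.comp measurable_fst) (hg.comp measurable_snd))
    fun a => hYν (by
      rw [show Prod.mk a ⁻¹' {p | g p.1 = g p.2} = g ⁻¹' {g a} by ext; simp [eq_comm]]
      exact (hfib (g a)).measure_zero ν)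

theorem ProbabilityTheory.iIndepFun.ae_injective_comp {ι : Type*} [Countable ι] [MeasurableEq β]
    {ν : Measure α} [NullSingletonClass ν] {g : α → β} (hg : Measurable g)
    (hfib : ∀ b, (g ⁻¹' {b}).Countable) {X : ι → Ω → α} (hX : ∀ i, Measurable (X i))
    (hind : iIndepFun X μ) (hν : ∀ i, μ.map (X i) ≪ ν) :
    ∀ᵐ ω ∂μ, Function.Injective fun i => g (X i ω) := by
  simp only [Function.Injective, ae_all_iff]
  intro i j
  rcases eq_or_ne i j with rfl | hij
  · exact .of_forall fun _ _ => rfl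
  · have := (hind.indepFun hij).measure_comp_eq_comp_eq_zero hg hfib (hX i) (hX j) (hν j)
    filter_upwards [measure_eq_zero_iff_ae_notMem.mp this] with ω hω h
    exact absurd h hω

end Independence

theorem Matrix.mulVec_injective_of_pow {R : Type*} [CommRing R] [IsDomain R] {m n : ℕ}
    (hnm : n ≤ m) {x : Fin n → R} (hx : Function.Injective x) :
    Function.Injective (of fun (k : Fin m) (u : Fin n) => x u ^ (k : ℕ)).mulVec := by
  refine (injective_iff_map_eq_zero (mulVecLin _)).mpr fun v hv =>
    eq_zero_of_forall_pow_sum_mul_pow_eq_zero hx fun k => ?_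
  simpa [mulVec, dotProduct, mul_comm] using congrFun hv (Fin.castLE hnm k)

theorem Matrix.posDef_conjTranspose_mul_self_of_mulVec_injective {m n R : Type*} [Fintype m]
    [Fintype n] [Ring R] [PartialOrder R] [StarRing R] [StarOrderedRing R] [NoZeroDivisors R]
    {M : Matrix m n R} (hM : Function.Injective M.mulVec) : (Mᴴ * M).PosDef := by
  classical
  simpa using PosDef.one.conjTranspose_mul_mul_same hM

theorem steer_eq_smul_pow (N : ℕ) (θ : ℝ) (k : Fin N) :
    steer N θ k = ((1 / Real.sqrt N : ℝ) : ℂ) * cexp (θ * I) ^ (k : ℕ) := by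
  rw [steer, ← Complex.exp_nat_mul]
  ring_nf

theorem stmt1_general {Ω : Type*} [MeasurableSpace Ω] (μ : Measure Ω) [IsProbabilityMeasure μ]
    (N U : ℕ) (hN : 0 < N) (hUN : U ≤ N)
    (κ : ℝ) (hκ0 : 0 < κ)
    (φ : Fin U → Ω → ℝ) (hφ : ∀ u, Measurable (φ u))
    (hindep : iIndepFun φ μ)
    (hac : ∀ u, μ.map (φ u) ≪ volume)
    (A : Ω → Matrix (Fin N) (Fin U) ℂ)
    (hA : ∀ ω k u, A ω k u = steer N (κ * Real.sin (φ u ω)) k) :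
    ∀ᵐ ω ∂μ, ((A ω)ᴴ * (A ω)).PosDef := by
  set node : ℝ → ℂ := fun t => cexp ((κ * Real.sin t : ℝ) * I)
  have hdistinct : ∀ᵐ ω ∂μ, Function.Injective fun u => node (φ u ω) :=
    hindep.ae_injective_comp (by fun_prop)
      (fun c => countable_preimage_cexp_mul_sin hκ0.ne' (Set.countable_singleton c)) hφ hac
  have hc : ((1 / Real.sqrt N : ℝ) : ℂ) ≠ 0 := by simp [hN.ne']
  filter_upwards [hdistinct] with ω hω
  have hAω :
      A ω = ((1 / Real.sqrt N : ℝ) : ℂ) • of fun (k : Fin N) u => node (φ u ω) ^ (k : ℕ) := by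
    ext k u
    simp only [hA, steer_eq_smul_pow, Matrix.smul_apply, of_apply, smul_eq_mul, node]
  refine posDef_conjTranspose_mul_self_of_mulVec_injective fun v w h => ?_
  rw [hAω, smul_mulVec, smul_mulVec] at h
  exact mulVec_injective_of_pow hUN hω (smul_right_injective _ hc h)

theorem stmt1 {Ω : Type*} [MeasurableSpace Ω] (μ : Measure Ω) [IsProbabilityMeasure μ]
    (N U : ℕ) (hN : 0 < N) (hU : 0 < U) (hUN : U ≤ N)
    (κ : ℝ) (hκ0 : 0 < κ) (hκπ : κ ≤ Real.pi)
    (φ : Fin U → Ω → ℝ) (hφ : ∀ u, Measurable (φ u))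
    (hindep : iIndepFun φ μ)
    (hac : ∀ u, μ.map (φ u) ≪ volume)
    (A : Ω → Matrix (Fin N) (Fin U) ℂ)
    (hA : ∀ ω k u, A ω k u = steer N (κ * Real.sin (φ u ω)) k) :
    ∀ᵐ ω ∂μ, ((A ω)ᴴ * (A ω)).PosDef :=
  stmt1_general μ N U hN hUN κ hκ0 φ hφ hindep hac A hA
end

section
/- Let P be an n×n Hermitian positive definite complex matrix, and let λ_min > 0 and λ_max be its smallest and largest eigenvalues. Then every diagonal entry of P, P_{uu}, is a positive real number, and for each index u, the diagonal entry of the inverse satisfies (P^{-1})_{uu} ≤ (1/(4 P_{uu})) · (λ_max/λ_min + λ_min/λ_max + 2). -/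
/-!
For `x ∈ [m, M]` with `m > 0` one has `x + mM/x ≤ m + M`, since the difference is
`(x - m)(M - x)/x`. Through the continuous functional calculus this becomes the Loewner
inequality `P + mM P⁻¹ ≤ (m + M) I`, whose `u`-th diagonal entry reads `p + mM q ≤ m + M`
for `p = P_uu`, `q = (P⁻¹)_uu`. Hence `mM pq ≤ (m + M - p) p ≤ (m + M)²/4`, which is the
bound, as `(M/m + m/M + 2)/4 = (m + M)²/(4mM)`.
-/

open Matrix
open scoped ComplexOrder Ring MatrixOrder

lemma add_div_le_add_of_mem_Icc {m M x : ℝ} (hm : 0 < m) (hx : x ∈ Set.Icc m M) :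
    x + m * M / x ≤ m + M := by
  obtain ⟨hmx, hxM⟩ := hx
  have hx0 : 0 < x := hm.trans_le hmx
  have key : m + M - (x + m * M / x) = (x - m) * (M - x) / x := by
    field_simp
    ring
  rw [← sub_nonneg, key]
  exact div_nonneg (mul_nonneg (sub_nonneg.2 hmx) (sub_nonneg.2 hxM)) hx0.le

lemma IsSelfAdjoint.add_smul_ringInverse_le {A : Type*} [TopologicalSpace A] [Ring A]
    [StarRing A] [PartialOrder A] [StarOrderedRing A] [Algebra ℝ A]
    [ContinuousFunctionalCalculus ℝ A IsSelfAdjoint] {a : A} (ha : IsSelfAdjoint a) {m M : ℝ}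
    (hm : 0 < m) (hspec : spectrum ℝ a ⊆ Set.Icc m M) :
    a + (m * M) • a⁻¹ʳ ≤ algebraMap ℝ A (m + M) := by
  have h0 : ∀ x ∈ spectrum ℝ a, x ≠ 0 := fun x hx => (hm.trans_le (hspec hx).1).ne'
  have hinv : ContinuousOn (fun x : ℝ => x⁻¹) (spectrum ℝ a) := continuousOn_inv₀.mono h0
  have hunit : IsUnit a := spectrum.isUnit_of_zero_notMem ℝ fun h => h0 0 h rfl
  calc a + (m * M) • a⁻¹ʳ = cfc (fun x : ℝ => x + m * M * x⁻¹) a := by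
        rw [cfc_add .., cfc_const_mul .., cfc_id' ..]
        congr 2
        exact (cfc_ringInverse_id (R := ℝ) a hunit).symm
    _ ≤ cfc (fun _ : ℝ => m + M) a :=
        cfc_mono fun x hx => by
          simpa [div_eq_mul_inv] using add_div_le_add_of_mem_Icc hm (hspec hx)
    _ = algebraMap ℝ A (m + M) := cfc_const ..

lemma Matrix.IsHermitian.re_diag_add_mul_re_diag_inv_le {𝕜 n : Type*} [RCLike 𝕜] [Fintype n]
    [DecidableEq n] {A : Matrix n n 𝕜} (hA : A.IsHermitian) {m M : ℝ} (hm : 0 < m)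
    (hev : ∀ i, hA.eigenvalues i ∈ Set.Icc m M) (u : n) :
    RCLike.re (A u u) + m * M * RCLike.re (A⁻¹ u u) ≤ m + M := by
  have hspec : spectrum ℝ A ⊆ Set.Icc m M := by
    rw [hA.spectrum_real_eq_range_eigenvalues]
    exact Set.range_subset_iff.2 hev
  have hle := hA.isSelfAdjoint.add_smul_ringInverse_le hm hspec
  have hdiag := RCLike.re_le_re ((Matrix.le_iff.1 hle).diag_nonneg (i := u))
  simpa [← nonsing_inv_eq_ringInverse, algebraMap_eq_diagonal, RCLike.smul_re] using hdiag

lemma le_kantorovich_of_add_mul_le {m M p q : ℝ} (hm : 0 < m) (hM : 0 < M) (hp : 0 < p)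
    (h : p + m * M * q ≤ m + M) :
    q ≤ 1 / (4 * p) * (M / m + m / M + 2) := by
  have hbound : 1 / (4 * p) * (M / m + m / M + 2) = (m + M) ^ 2 / (4 * m * M * p) := by
    field_simp
    ring
  rw [hbound, le_div_iff₀ (by positivity)]
  nlinarith [sq_nonneg (m + M - 2 * p)]

theorem stmt2 (n : ℕ) (P : Matrix (Fin n) (Fin n) ℂ) (hP : P.PosDef)
    (lmin lmax : ℝ)
    (hmin : IsLeast (Set.range hP.1.eigenvalues) lmin)
    (hmax : IsGreatest (Set.range hP.1.eigenvalues) lmax)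
    (hlmin : 0 < lmin) :
    ∀ u : Fin n,
      (0 < (P u u).re ∧ (P u u).im = 0) ∧
      ((P⁻¹) u u).re ≤ (1 / (4 * (P u u).re)) * (lmax / lmin + lmin / lmax + 2) := by
  intro u
  have hev : ∀ i, hP.1.eigenvalues i ∈ Set.Icc lmin lmax :=
    fun i => ⟨hmin.2 ⟨i, rfl⟩, hmax.2 ⟨i, rfl⟩⟩
  obtain ⟨hre, him⟩ := Complex.lt_def.1 (hP.diag_pos (i := u))
  refine ⟨⟨hre, him.symm⟩, ?_⟩
  exact le_kantorovich_of_add_mul_le hlmin (hlmin.trans_le (hmin.2 hmax.1)) hre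
    (hP.1.re_diag_add_mul_re_diag_inv_le hlmin hev u)
end

section
/- Let A ∈ ℂ^{N×U} have full column rank and unit-norm columns, so that P = AᴴA is Hermitian positive definite with all diagonal entries equal to 1. Let σ_max² and σ_min² denote the largest and smallest eigenvalues of P (the squared largest and smallest singular values of A). Then for every real c ≥ 0 and every index u, log₂(1 + c / (P^{-1})_{uu}) ≥ log₂(1 + 4c · (σ_max²/σ_min² + σ_min²/σ_max² + 2)^{-1}). -/
/-!
Diagonalize `P = AᴴA = V diag(λ) Vᴴ`. With the weights `wⱼ = |Vᵤⱼ|²`, which sum to `1`,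
`(P⁻¹)ᵤᵤ = ∑ⱼ wⱼ / λⱼ` while `1 = Pᵤᵤ = ∑ⱼ wⱼ λⱼ`. On `[m, M] ∋ λⱼ` the convex function `1/λ`
lies below its chord `(m + M - λ)/(mM)`, hence `(P⁻¹)ᵤᵤ ≤ (m + M - 1)/(mM) ≤ (m + M)²/(4mM)`.
-/

open Matrix
open scoped ComplexOrder

theorem Finset.sum_mul_inv_le_of_mem_Icc {ι : Type*} (s : Finset ι) {w x : ι → ℝ}
    {m M : ℝ} (hm : 0 < m) (hw : ∀ i ∈ s, 0 ≤ w i) (hx : ∀ i ∈ s, x i ∈ Set.Icc m M) :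
    ∑ i ∈ s, w i * (x i)⁻¹ ≤ ((m + M) * ∑ i ∈ s, w i - ∑ i ∈ s, w i * x i) / (m * M) := by
  rw [Finset.mul_sum, ← Finset.sum_sub_distrib, Finset.sum_div]
  refine Finset.sum_le_sum fun i hi => ?_
  obtain ⟨hmx, hxM⟩ := hx i hi
  have hinv : (x i)⁻¹ ≤ (m + M - x i) / (m * M) := by
    rw [inv_eq_one_div, div_le_div_iff₀ (hm.trans_le hmx) (by nlinarith)]
    nlinarith [mul_nonneg (sub_nonneg.2 hmx) (sub_nonneg.2 hxM)]
  calc w i * (x i)⁻¹ ≤ w i * ((m + M - x i) / (m * M)) :=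
        mul_le_mul_of_nonneg_left hinv (hw i hi)
    _ = ((m + M) * w i - w i * x i) / (m * M) := by ring

theorem add_sub_one_div_mul_le {m M : ℝ} (hm : 0 < m) (hM : 0 < M) :
    (m + M - 1) / (m * M) ≤ (M / m + m / M + 2) / 4 := by
  rw [div_le_div_iff₀ (by positivity) (by norm_num)]
  field_simp
  nlinarith [sq_nonneg (m + M - 2), mul_pos hm hM]

namespace Matrix.IsHermitian

variable {n 𝕜 : Type*} [Fintype n] [DecidableEq n] [RCLike 𝕜] {A : Matrix n n 𝕜}

lemma cfc_apply_self (hA : A.IsHermitian) (f : ℝ → ℝ) (i : n) :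
    hA.cfc f i i = ((∑ j, ‖(hA.eigenvectorUnitary : Matrix n n 𝕜) i j‖ ^ 2 *
      f (hA.eigenvalues j) : ℝ) : 𝕜) := by
  rw [IsHermitian.cfc, Unitary.conjStarAlgAut_apply, mul_apply]
  push_cast
  refine Finset.sum_congr rfl fun j _ => ?_
  rw [mul_diagonal, star_apply, ← RCLike.mul_conj]
  simp only [Function.comp_apply, RCLike.star_def]
  ring

lemma sum_norm_eigenvectorUnitary_sq (hA : A.IsHermitian) (i : n) :
    ∑ j, ‖(hA.eigenvectorUnitary : Matrix n n 𝕜) i j‖ ^ 2 = 1 := by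
  have h := congr_fun (congr_fun (Unitary.coe_mul_star_self hA.eigenvectorUnitary) i) i
  rw [Unitary.coe_star, mul_apply, one_apply_eq] at h
  simp only [star_apply, RCLike.star_def, RCLike.mul_conj] at h
  exact_mod_cast h

lemma cfc_id_eq (hA : A.IsHermitian) : hA.cfc id = A := by
  rw [← hA.cfc_eq]
  exact cfc_id ℝ A hA

lemma inv_eq_cfc_inv (hA : A.IsHermitian) (hu : IsUnit A) : A⁻¹ = hA.cfc (·⁻¹) := by
  rw [← hA.cfc_eq, nonsing_inv_eq_ringInverse]
  exact (cfc_ringInverse_id A hu hA).symm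

lemma re_inv_apply_self_le (hA : A.IsHermitian) {m M : ℝ} (hm : 0 < m)
    (hev : ∀ j, hA.eigenvalues j ∈ Set.Icc m M) (i : n) :
    RCLike.re (A⁻¹ i i) ≤ (m + M - RCLike.re (A i i)) / (m * M) := by
  have hu : IsUnit A := (hA.posDef_iff_eigenvalues_pos.2 fun j => hm.trans_le (hev j).1).isUnit
  rw [hA.inv_eq_cfc_inv hu, hA.cfc_apply_self, RCLike.ofReal_re]
  conv_rhs => rw [← hA.cfc_id_eq, hA.cfc_apply_self, RCLike.ofReal_re, ← mul_one (m + M),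
    ← hA.sum_norm_eigenvectorUnitary_sq i]
  exact Finset.univ.sum_mul_inv_le_of_mem_Icc hm (fun j _ => by positivity) fun j _ => hev j

end Matrix.IsHermitian

theorem stmt4 (N U : ℕ) (A : Matrix (Fin N) (Fin U) ℂ)
    (hA : LinearIndependent ℂ Aᵀ)
    (hcols : ∀ u, (Aᴴ * A) u u = 1)
    (smax smin : ℝ)
    (hmax : IsGreatest
      (Set.range (Matrix.isHermitian_conjTranspose_mul_self A).eigenvalues) smax)
    (hmin : IsLeast
      (Set.range (Matrix.isHermitian_conjTranspose_mul_self A).eigenvalues) smin) :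
    ∀ (c : ℝ), 0 ≤ c → ∀ u : Fin U,
      Real.logb 2 (1 + 4 * c * (smax / smin + smin / smax + 2)⁻¹) ≤
        Real.logb 2 (1 + c / (((Aᴴ * A)⁻¹) u u).re) := by
  intro c hc u
  have hP : (Aᴴ * A).PosDef := .conjTranspose_mul_self A (mulVec_injective_iff.mpr hA)
  obtain ⟨imin, himin⟩ := hmin.1
  have hm : 0 < smin := himin ▸ hP.eigenvalues_pos imin
  have hM : 0 < smax := hm.trans_le (hmin.2 hmax.1)
  have hev j : hP.isHermitian.eigenvalues j ∈ Set.Icc smin smax :=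
    ⟨hmin.2 ⟨j, rfl⟩, hmax.2 ⟨j, rfl⟩⟩
  have hd : ((Aᴴ * A)⁻¹ u u).re ≤ (smin + smax - 1) / (smin * smax) := by
    simpa [hcols u] using hP.isHermitian.re_inv_apply_self_le hm hev u
  have hd0 : 0 < ((Aᴴ * A)⁻¹ u u).re := (RCLike.pos_iff.mp hP.inv.diag_pos).1
  refine Real.logb_le_logb_of_le one_lt_two (by positivity) (add_le_add le_rfl ?_)
  calc 4 * c * (smax / smin + smin / smax + 2)⁻¹
        = c / ((smax / smin + smin / smax + 2) / 4) := by rw [div_div_eq_mul_div]; ring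
    _ ≤ c / ((Aᴴ * A)⁻¹ u u).re :=
      div_le_div_of_nonneg_left hc hd0 (hd.trans (add_sub_one_div_mul_le hm hM))
end
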